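/- Let T be a directed tree such that the set Chi(u) of children of u is countably infinite for every u ∈ V. Then there exists a family λ = {λ_v}_{v∈V°} of nonzero complex numbers such that the weighted shift S_λ is injective and densely defined, D(S_λ) ⊄ D(S_λ*), and D(S_λ²) = {0}. -/

import Mathlib

open scoped ENNReal NNReal Classical

noncomputable section

/-- A directed tree: a directed graph with nonempty vertex set in which each vertex has
at most one parent, there are no circuits, and the underlying undirected graph is
connected and has no cycles (i.e. is a tree). -/
structure DirectedTree (V : Type) where
  edge : V → V → Prop
  nonempty : Nonempty V
  antisymm : ∀ u v : V, edge u v → ¬ edge v u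
  parent_unique : ∀ u v w : V, edge u w → edge v w → u = v
  isTree : (SimpleGraph.fromRel edge).IsTree

namespace DirectedTree

variable {V : Type} (T : DirectedTree V)

/-- The set of children of a vertex. -/
def chi (u : V) : Set V := {v | T.edge u v}

/-- `v` has a parent. -/
def HasParent (v : V) : Prop := ∃ u, T.edge u v

/-- `V⁰`: the set of non-root vertices, i.e. the vertices possessing a parent. -/
def Vcirc : Set V := {v | T.HasParent v}

/-- The tree is leafless if every vertex has a child. -/
def Leafless : Prop := ∀ u : V, (T.chi u).Nonempty

/-- The parent of a vertex (junk value if the vertex is a root). -/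
def par (v : V) : V := if h : T.HasParent v then h.choose else T.nonempty.some

/-- The set of descendants of a vertex. -/
def desc (u : V) : Set V := {w | Relation.ReflTransGen T.edge u w}

/-- The formal weighted shift map `Λ_T` acting on all complex functions on `V`. -/
def Lam (lam : V → ℂ) (f : V → ℂ) : V → ℂ :=
  fun v => if T.HasParent v then lam v * f (T.par v) else 0

/-- The domain of the weighted shift `S_λ`. -/
def domain (lam : V → ℂ) : Set (lp (fun _ : V => ℂ) 2) :=
  {f | Memℓp (T.Lam lam ⇑f) 2}

/-- The weighted shift `S_λ` (extended by `0` outside its domain). -/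
def shift (lam : V → ℂ) (f : lp (fun _ : V => ℂ) 2) : lp (fun _ : V => ℂ) 2 :=
  if h : f ∈ T.domain lam then (⟨T.Lam lam ⇑f, h⟩ : lp (fun _ : V => ℂ) 2) else 0

/-- The domain of `S_λ²`. -/
def squareDomain (lam : V → ℂ) : Set (lp (fun _ : V => ℂ) 2) :=
  {f | f ∈ T.domain lam ∧ T.shift lam f ∈ T.domain lam}

/-- The domain of the adjoint `S_λ*`. -/
def adjDomain (lam : V → ℂ) : Set (lp (fun _ : V => ℂ) 2) :=
  {g | ∃ h : lp (fun _ : V => ℂ) 2,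
    ∀ f ∈ T.domain lam, (inner ℂ (T.shift lam f) g : ℂ) = inner ℂ f h}

/-- `S_λ` is hyponormal: it is densely defined, `D(S_λ) ⊆ D(S_λ*)` and
`‖S_λ* f‖ ≤ ‖S_λ f‖` for every `f ∈ D(S_λ)` (the adjoint value at `f` being any vector
`h` satisfying `⟪S_λ g, f⟫ = ⟪g, h⟫` for all `g ∈ D(S_λ)`; it is unique by density). -/
def IsHyponormal (lam : V → ℂ) : Prop :=
  Dense (T.domain lam) ∧ T.domain lam ⊆ T.adjDomain lam ∧
    ∀ f ∈ T.domain lam, ∀ h : lp (fun _ : V => ℂ) 2,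
      (∀ g ∈ T.domain lam, (inner ℂ (T.shift lam g) f : ℂ) = inner ℂ g h) →
        ‖h‖ ≤ ‖T.shift lam f‖

/-- `ζ_u = (Σ_{v ∈ Chi(u)} |λ_v|²)^{1/2} ∈ [0,∞]`. -/
def zeta (lam : V → ℂ) (u : V) : ℝ≥0∞ :=
  (∑' v : T.chi u, ((‖lam (v : V)‖₊ : ℝ≥0∞)) ^ 2) ^ (1/2 : ℝ)

end DirectedTree

/-!
Fix enumerations `ℕ ≃ Chi(u)` and let `i(v)` be the position of `v` among its siblings.
The weights `λ_v = 2^{i(par v)} / 2^{i(v)}` make every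
`ζ_u² = Σ_{v ∈ Chi(u)} |λ_v|² = (4/3)·4^{i(u)}` finite, so
`D(S_λ) = {f : Σ_u ζ_u² |f(u)|² < ∞}` contains every finitely supported vector.
Along the children `v` of `u`, `ζ_v² |λ_v|² = (4/3)·4^{i(u)}` is constant, so
`S_λ f ∈ D(S_λ)` forces `f(u) = 0`. Finally, if `w_j` is the `j`-th child of some vertex and
`z_j` the first child of `w_j`, then `g = Σ_j 2^{-j} e_{z_j}` lies in `D(S_λ)`, whereas
`(S_λ^* g)(w_j) = conj(λ_{z_j}) 2^{-j} = 1` for every `j`, so `g ∉ D(S_λ^*)`.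
-/

open ComplexConjugate

theorem memℓp_two_iff_summable_sq {ι : Type*} {f : ι → ℂ} :
    Memℓp f 2 ↔ Summable fun i => ‖f i‖ ^ 2 := by
  rw [memℓp_gen_iff (by norm_num)]
  norm_num

theorem summable_mul_norm_extend_zero_sq {ι V : Type*} {z : ι → V} (hz : z.Injective)
    (ψ : V → ℝ) (c : ι → ℂ) :
    (Summable fun v => ψ v * ‖Function.extend z c 0 v‖ ^ 2) ↔
      Summable fun j => ψ (z j) * ‖c j‖ ^ 2 := by
  rw [← hz.summable_iff fun v hv => by rw [Function.extend_apply' _ _ _ hv]; simp]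
  simp only [Function.comp_def, hz.extend_apply]

namespace DirectedTree

variable {V : Type} (T : DirectedTree V)

theorem edge_par {v : V} (hv : T.HasParent v) : T.edge (T.par v) v := by
  rw [par, dif_pos hv]
  exact hv.choose_spec

theorem par_eq_of_edge {u v : V} (huv : T.edge u v) : T.par v = u :=
  T.parent_unique _ _ _ (T.edge_par ⟨u, huv⟩) huv

def nonRootEquivSigmaChi : {v // T.HasParent v} ≃ Σ u, T.chi u where
  toFun v := ⟨T.par v, v, T.edge_par v.2⟩
  invFun p := ⟨p.2, p.1, p.2.2⟩
  left_inv _ := rfl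
  right_inv p := Sigma.subtype_ext (T.par_eq_of_edge p.2.2) rfl

theorem summable_iff_summable_chi {φ : V → ℝ} (hφ : 0 ≤ φ)
    (hroot : ∀ v, ¬ T.HasParent v → φ v = 0) :
    Summable φ ↔
      (∀ u, Summable fun v : T.chi u => φ v) ∧ Summable fun u => ∑' v : T.chi u, φ v := by
  rw [← (Subtype.val_injective (p := T.HasParent)).summable_iff (by simpa using hroot),
    ← T.nonRootEquivSigmaChi.symm.summable_iff]
  exact summable_sigma_of_nonneg fun _ => hφ _

/-- `zeta lam u ^ 2` as a real number, when the series converges. -/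
def zetaSq (lam : V → ℂ) (u : V) : ℝ := ∑' v : T.chi u, ‖lam v‖ ^ 2

section Shift

variable {lam : V → ℂ}

theorem Lam_apply_of_edge (f : V → ℂ) {u v : V} (huv : T.edge u v) :
    T.Lam lam f v = lam v * f u := by
  rw [Lam, if_pos ⟨u, huv⟩, T.par_eq_of_edge huv]

theorem Lam_single_of_notMem_chi {u v : V} (hv : v ∉ T.chi u) (c : ℂ) :
    T.Lam lam (lp.single 2 u c) v = 0 := by
  unfold Lam
  split_ifs with hp
  · rw [lp.single_apply_ne _ _ _ fun h : T.par v = u => hv (h ▸ T.edge_par hp), mul_zero]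
  · rfl

theorem coe_shift {f : lp (fun _ : V => ℂ) 2} (hf : f ∈ T.domain lam) :
    ⇑(T.shift lam f) = T.Lam lam f := by
  rw [shift, dif_pos hf]

theorem zero_mem_domain : (0 : lp (fun _ : V => ℂ) 2) ∈ T.domain lam := by
  show Memℓp _ 2
  convert zero_memℓp
  ext v
  simp [Lam]

theorem add_mem_domain {f g : lp (fun _ : V => ℂ) 2} (hf : f ∈ T.domain lam)
    (hg : g ∈ T.domain lam) : f + g ∈ T.domain lam := by
  have hadd : T.Lam lam ⇑(f + g) = T.Lam lam f + T.Lam lam g := by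
    ext v
    simp only [Lam, lp.coeFn_add, Pi.add_apply]
    split_ifs <;> ring
  show Memℓp _ 2
  exact hadd ▸ Memℓp.add hf hg

theorem shift_zero : T.shift lam 0 = 0 := by
  ext v
  simp [T.coe_shift T.zero_mem_domain, Lam]

theorem dense_domain (hsingle : ∀ u c, lp.single 2 u c ∈ T.domain lam) :
    Dense (T.domain lam) := fun f =>
  mem_closure_of_tendsto (lp.hasSum_single (by norm_num) f) <| .of_forall fun _ =>
    Finset.sum_induction _ (· ∈ T.domain lam) (fun _ _ => T.add_mem_domain)
      T.zero_mem_domain fun u _ => hsingle u (f u)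

theorem injOn_shift (hchild : ∀ u, ∃ v, T.edge u v ∧ lam v ≠ 0) :
    Set.InjOn (T.shift lam) (T.domain lam) := by
  intro f hf g hg hfg
  ext u
  obtain ⟨v, huv, hv⟩ := hchild u
  have hfgv := congrFun (congrArg (⇑) hfg) v
  rw [T.coe_shift hf, T.coe_shift hg, T.Lam_apply_of_edge _ huv,
    T.Lam_apply_of_edge _ huv] at hfgv
  exact mul_left_cancel₀ hv hfgv

theorem hasSum_inner_shift_single {u : V} (hu : lp.single 2 u 1 ∈ T.domain lam)
    (g : lp (fun _ : V => ℂ) 2) :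
    HasSum (fun v : T.chi u => g v * conj (lam v))
      (inner ℂ (T.shift lam (lp.single 2 u 1)) g) := by
  have hsupp : Function.support (fun v => inner ℂ (T.shift lam (lp.single 2 u 1) v) (g v))
      ⊆ T.chi u := fun v hv => by
    by_contra hvu
    simp [T.coe_shift hu, T.Lam_single_of_notMem_chi hvu] at hv
  convert (hasSum_subtype_iff_of_support_subset hsupp).2 (lp.hasSum_inner _ g) using 2 with v
  simp [T.coe_shift hu, T.Lam_apply_of_edge _ v.2]

theorem memℓp_of_mem_adjDomain (hsingle : ∀ u, lp.single 2 u 1 ∈ T.domain lam)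
    {g : lp (fun _ : V => ℂ) 2} (hg : g ∈ T.adjDomain lam) :
    Memℓp (fun u => ∑' v : T.chi u, g v * conj (lam v)) 2 := by
  obtain ⟨h, hh⟩ := hg
  convert lp.memℓp h using 1
  funext u
  rw [(T.hasSum_inner_shift_single (hsingle u) g).tsum_eq, hh _ (hsingle u),
    lp.inner_single_left, RCLike.inner_apply, map_one, mul_one]

section FiniteZeta

variable (hζ : ∀ u, Summable fun v : T.chi u => ‖lam v‖ ^ 2)
include hζ

theorem mem_domain_iff {f : lp (fun _ : V => ℂ) 2} :
    f ∈ T.domain lam ↔ Summable fun u => T.zetaSq lam u * ‖f u‖ ^ 2 := by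
  have hchi (u : V) (v : T.chi u) : ‖T.Lam lam f v‖ ^ 2 = ‖lam v‖ ^ 2 * ‖f u‖ ^ 2 := by
    rw [T.Lam_apply_of_edge _ v.2, norm_mul, mul_pow]
  change Memℓp _ 2 ↔ _
  rw [memℓp_two_iff_summable_sq,
    T.summable_iff_summable_chi (fun _ => by positivity) fun v hv => by simp [Lam, hv]]
  simp only [hchi, tsum_mul_right, zetaSq]
  exact and_iff_right fun u => (hζ u).mul_right _

theorem single_mem_domain (u : V) (c : ℂ) : lp.single 2 u c ∈ T.domain lam :=
  (T.mem_domain_iff hζ).2 <| summable_of_ne_finset_zero (s := {u}) fun u' hu' => by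
    rw [lp.single_apply_ne _ _ _ (Finset.notMem_singleton.1 hu')]
    simp

theorem eq_zero_of_mem_squareDomain {f : lp (fun _ : V => ℂ) 2} (hf : f ∈ T.squareDomain lam)
    {u : V} (hu : ¬ Summable fun v : T.chi u => T.zetaSq lam v * ‖lam v‖ ^ 2) : f u = 0 := by
  obtain ⟨hfD, hSf⟩ := hf
  by_contra hfu
  refine hu ((summable_mul_right_iff (pow_ne_zero 2 (norm_ne_zero_iff.2 hfu))).1 ?_)
  refine (((T.mem_domain_iff hζ).1 hSf).subtype (T.chi u)).congr fun v => ?_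
  simp only [Function.comp_apply, T.coe_shift hfD, T.Lam_apply_of_edge _ v.2, norm_mul, mul_pow,
    mul_assoc]

theorem squareDomain_eq_singleton_zero
    (h : ∀ u, ¬ Summable fun v : T.chi u => T.zetaSq lam v * ‖lam v‖ ^ 2) :
    T.squareDomain lam = {0} := by
  refine Set.eq_singleton_iff_unique_mem.2 ⟨⟨T.zero_mem_domain, ?_⟩, fun _ hf => ?_⟩
  · rw [shift_zero]
    exact T.zero_mem_domain
  · exact lp.ext (funext fun u => T.eq_zero_of_mem_squareDomain hζ hf (h u))

end FiniteZeta

end Shift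

section Weight

variable (e : ∀ u : V, ℕ ≃ T.chi u)

def childIdx (v : V) : ℕ :=
  if hv : T.HasParent v then (e (T.par v)).symm ⟨v, T.edge_par hv⟩ else 0

theorem par_enum (u : V) (n : ℕ) : T.par (e u n) = u :=
  T.par_eq_of_edge (e u n).2

theorem enum_injective (u : V) : Function.Injective fun n => (e u n : V) :=
  Subtype.val_injective.comp (e u).injective

theorem childIdx_enum (u : V) (n : ℕ) : T.childIdx e (e u n) = n := by
  have hidx {u v : V} (huv : T.edge u v) : T.childIdx e v = (e u).symm ⟨v, huv⟩ := by
    obtain rfl := T.par_eq_of_edge huv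
    rw [childIdx, dif_pos ⟨_, huv⟩]
  simp [hidx (e u n).2]

def weight (v : V) : ℂ := 2 ^ T.childIdx e (T.par v) / 2 ^ T.childIdx e v

theorem weight_enum (u : V) (n : ℕ) : T.weight e (e u n) = 2 ^ T.childIdx e u / 2 ^ n := by
  rw [weight, par_enum, childIdx_enum]

theorem weight_ne_zero (v : V) : T.weight e v ≠ 0 := by
  simp [weight]

theorem norm_weight_enum_sq (u : V) (n : ℕ) :
    ‖T.weight e (e u n)‖ ^ 2 = 4 ^ T.childIdx e u * (1 / 4) ^ n := by
  rw [weight_enum, norm_div, norm_pow, norm_pow, Complex.norm_two, one_div, inv_pow,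
    show (4 : ℝ) = 2 ^ 2 by norm_num, ← pow_mul, ← pow_mul]
  field_simp
  ring

theorem hasSum_norm_weight_sq (u : V) :
    HasSum (fun v : T.chi u => ‖T.weight e v‖ ^ 2) (4 / 3 * 4 ^ T.childIdx e u) := by
  have hfun : (fun v : T.chi u => ‖T.weight e v‖ ^ 2) ∘ e u =
      fun n => 4 ^ T.childIdx e u * (1 / 4) ^ n :=
    funext (T.norm_weight_enum_sq e u)
  rw [← (e u).hasSum_iff, hfun,
    show (4 / 3 : ℝ) * 4 ^ T.childIdx e u = 4 ^ T.childIdx e u * (1 - 1 / 4)⁻¹ by ring]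
  exact (hasSum_geometric_of_lt_one (by norm_num) (by norm_num)).mul_left _

theorem summable_norm_weight_sq (u : V) : Summable fun v : T.chi u => ‖T.weight e v‖ ^ 2 :=
  (T.hasSum_norm_weight_sq e u).summable

theorem zetaSq_weight (u : V) : T.zetaSq (T.weight e) u = 4 / 3 * 4 ^ T.childIdx e u :=
  (T.hasSum_norm_weight_sq e u).tsum_eq

theorem not_summable_zetaSq_mul_norm_weight_sq (u : V) :
    ¬ Summable fun v : T.chi u => T.zetaSq (T.weight e) v * ‖T.weight e v‖ ^ 2 := by
  rw [← (e u).summable_iff]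
  have hconst (n : ℕ) : T.zetaSq (T.weight e) (e u n) * ‖T.weight e (e u n)‖ ^ 2 =
      4 / 3 * 4 ^ T.childIdx e u := by
    rw [zetaSq_weight, norm_weight_enum_sq, childIdx_enum, one_div, inv_pow]
    field_simp
  simp only [Function.comp_def, hconst, summable_const_iff]
  positivity

def grandchild (j : ℕ) : V := e (e T.nonempty.some j) 0

theorem par_grandchild (j : ℕ) : T.par (T.grandchild e j) = e T.nonempty.some j :=
  T.par_enum e _ 0

theorem grandchild_injective : Function.Injective (T.grandchild e) := fun j k hjk =>
  T.enum_injective e _ (by simpa [par_grandchild] using congrArg T.par hjk)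

theorem weight_grandchild (j : ℕ) : T.weight e (T.grandchild e j) = 2 ^ j := by
  rw [grandchild, weight_enum, childIdx_enum]
  simp

theorem memℓp_extend_grandchild :
    Memℓp (Function.extend (T.grandchild e) (fun j => (2⁻¹ : ℂ) ^ j) 0) 2 := by
  have hgeom : Summable fun j : ℕ => (1 : ℝ) * ‖(2⁻¹ : ℂ) ^ j‖ ^ 2 := by
    refine (summable_geometric_of_lt_one (r := 1 / 4) (by norm_num) (by norm_num)).congr
      fun j => ?_
    rw [one_mul, norm_pow, norm_inv, Complex.norm_two, ← pow_mul, mul_comm, pow_mul]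
    norm_num
  rw [memℓp_two_iff_summable_sq]
  simpa only [one_mul] using
    (summable_mul_norm_extend_zero_sq (T.grandchild_injective e) (fun _ => 1) _).2 hgeom

def adjointWitness : lp (fun _ : V => ℂ) 2 := ⟨_, T.memℓp_extend_grandchild e⟩

theorem adjointWitness_mem_domain : T.adjointWitness e ∈ T.domain (T.weight e) := by
  rw [T.mem_domain_iff (T.summable_norm_weight_sq e)]
  refine (summable_mul_norm_extend_zero_sq (T.grandchild_injective e) _ _).2 ?_
  refine ((summable_geometric_of_lt_one (r := 1 / 4) (by norm_num) (by norm_num)).mul_left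
    (4 / 3)).congr fun j => ?_
  rw [zetaSq_weight, grandchild, childIdx_enum, norm_pow, norm_inv, Complex.norm_two, ← pow_mul,
    mul_comm j, pow_mul]
  norm_num

theorem tsum_adjointWitness_mul_conj_weight (j : ℕ) :
    ∑' v : T.chi (e T.nonempty.some j), T.adjointWitness e v * conj (T.weight e v) = 1 := by
  rw [tsum_eq_single ⟨T.grandchild e j, (e _ 0).2⟩]
  · show Function.extend _ _ _ (T.grandchild e j) * _ = 1
    rw [(T.grandchild_injective e).extend_apply, weight_grandchild]
    change (2⁻¹ : ℂ) ^ j * conj ((2 : ℂ) ^ j) = 1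
    rw [map_pow, map_ofNat, ← mul_pow, inv_mul_cancel₀ two_ne_zero, one_pow]
  · intro v hv
    suffices hv' : ¬ ∃ k, T.grandchild e k = v by
      show Function.extend _ _ _ _ * _ = 0
      rw [Function.extend_apply' _ _ _ hv', Pi.zero_apply, zero_mul]
    rintro ⟨k, hk⟩
    have hkj : k = j := T.enum_injective e T.nonempty.some <| by
      dsimp only
      rw [← T.par_grandchild e k, hk, T.par_eq_of_edge v.2]
    exact hv (Subtype.ext (hkj ▸ hk.symm))

theorem not_domain_weight_subset_adjDomain :
    ¬ T.domain (T.weight e) ⊆ T.adjDomain (T.weight e) := fun hsub => by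
  have hsum := memℓp_two_iff_summable_sq.1 <|
    T.memℓp_of_mem_adjDomain (T.single_mem_domain (T.summable_norm_weight_sq e) · 1)
      (hsub (T.adjointWitness_mem_domain e))
  have hconst := hsum.comp_injective (T.enum_injective e T.nonempty.some)
  simp only [Function.comp_def, tsum_adjointWitness_mul_conj_weight, norm_one, one_pow,
    summable_const_iff] at hconst
  exact one_ne_zero hconst

end Weight

end DirectedTree

/-- Theorem 3.2: if every vertex has countably infinitely many children, then there is a
family of nonzero weights such that `S_λ` is injective and densely defined,
`D(S_λ) ⊄ D(S_λ*)`, and `D(S_λ²) = {0}`. -/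
theorem stmt11 {V : Type} (T : DirectedTree V)
    (h : ∀ u : V, (T.chi u).Countable ∧ (T.chi u).Infinite) :
    ∃ lam : V → ℂ, (∀ v ∈ T.Vcirc, lam v ≠ 0) ∧
      Set.InjOn (T.shift lam) (T.domain lam) ∧ Dense (T.domain lam) ∧
      ¬ (T.domain lam ⊆ T.adjDomain lam) ∧
      T.squareDomain lam = ({0} : Set (lp (fun _ : V => ℂ) 2)) := by
  have e (u : V) : ℕ ≃ T.chi u := by
    have := (h u).1.to_subtype
    have := (h u).2.to_subtype
    have := (nonempty_denumerable (T.chi u)).some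
    exact (Denumerable.eqv _).symm
  have hζ := T.summable_norm_weight_sq e
  exact ⟨T.weight e, fun v _ => T.weight_ne_zero e v,
    T.injOn_shift fun u => ⟨e u 0, (e u 0).2, T.weight_ne_zero e _⟩,
    T.dense_domain (T.single_mem_domain hζ), T.not_domain_weight_subset_adjDomain e,
    T.squareDomain_eq_singleton_zero hζ (T.not_summable_zetaSq_mul_norm_weight_sq e)⟩
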